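/- arXiv:1712.03300 — 11 statements merged into one kernel-verified Lean document; each statement's English description precedes it below -/
import Mathlib

section
/- A category K has the cofinal amalgamation property if and only if there exists a dominating subcategory of K that has the amalgamation property (as a category in its own right). -/
open CategoryTheory

universe v u

variable {C : Type u} [Category.{v} C]

/-- An arrow `e : z ⟶ z'` is amalgamable. -/
def Amalgamable {z z' : C} (e : z ⟶ z') : Prop :=
  ∀ ⦃x y : C⦄ (f : z' ⟶ x) (g : z' ⟶ y),
    ∃ (w : C) (f' : x ⟶ w) (g' : y ⟶ w), e ≫ f ≫ f' = e ≫ g ≫ g'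

/-- The weak amalgamation property. -/
def HasWAP (C : Type u) [Category.{v} C] : Prop :=
  ∀ z : C, ∃ (z' : C) (e : z ⟶ z'), Amalgamable e

/-- The amalgamation property at an object `z`. -/
def HasAPAt (z : C) : Prop := Amalgamable (𝟙 z)

/-- The amalgamation property. -/
def HasAP (C : Type u) [Category.{v} C] : Prop := ∀ z : C, HasAPAt z

/-- The cofinal amalgamation property. -/
def HasCAP (C : Type u) [Category.{v} C] : Prop :=
  ∀ z : C, ∃ (z' : C) (_e : z ⟶ z'), HasAPAt z'

/-- `C` is directed. -/
def IsDirectedCat (C : Type u) [Category.{v} C] : Prop :=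
  ∀ x y : C, ∃ (z : C), Nonempty (x ⟶ z) ∧ Nonempty (y ⟶ z)

/-- A subcategory of `C`. -/
structure Subcat (C : Type u) [Category.{v} C] where
  objs : Set C
  homs : ∀ a b : C, Set (a ⟶ b)
  src_mem : ∀ {a b : C} {f : a ⟶ b}, f ∈ homs a b → a ∈ objs
  tgt_mem : ∀ {a b : C} {f : a ⟶ b}, f ∈ homs a b → b ∈ objs
  id_mem : ∀ a ∈ objs, 𝟙 a ∈ homs a a
  comp_mem : ∀ {a b c : C} {f : a ⟶ b} {g : b ⟶ c},
      f ∈ homs a b → g ∈ homs b c → f ≫ g ∈ homs a c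

namespace Subcat

/-- A full subcategory. -/
def Full (S : Subcat C) : Prop :=
  ∀ a ∈ S.objs, ∀ b ∈ S.objs, ∀ f : a ⟶ b, f ∈ S.homs a b

/-- Condition (C): cofinality. -/
def Cofinal (S : Subcat C) : Prop :=
  ∀ x : C, ∃ y ∈ S.objs, Nonempty (x ⟶ y)

/-- A dominating subcategory: (C) and (D). -/
def Dominating (S : Subcat C) : Prop :=
  S.Cofinal ∧ ∀ y ∈ S.objs, ∀ ⦃z : C⦄ (f : y ⟶ z),
    ∃ (u : C) (g : z ⟶ u), f ≫ g ∈ S.homs y u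

/-- A weakly dominating subcategory: (C) and (W). -/
def WeaklyDominating (S : Subcat C) : Prop :=
  S.Cofinal ∧ ∀ y ∈ S.objs, ∃ (y' : C) (j : y ⟶ y'), j ∈ S.homs y y' ∧
    ∀ ⦃z : C⦄ (f : y' ⟶ z), ∃ (u : C) (g : z ⟶ u), j ≫ f ≫ g ∈ S.homs y u

/-- A countable subcategory. -/
def IsCountable (S : Subcat C) : Prop :=
  S.objs.Countable ∧ ∀ a b : C, (S.homs a b).Countable

/-- An arrow amalgamable in the subcategory `S` (as a category in its own right). -/
def AmalgamableIn (S : Subcat C) {z z' : C} (e : z ⟶ z') : Prop :=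
  e ∈ S.homs z z' ∧ ∀ ⦃x y : C⦄ (f : z' ⟶ x) (g : z' ⟶ y),
    f ∈ S.homs z' x → g ∈ S.homs z' y →
      ∃ (w : C) (f' : x ⟶ w) (g' : y ⟶ w),
        f' ∈ S.homs x w ∧ g' ∈ S.homs y w ∧ e ≫ f ≫ f' = e ≫ g ≫ g'

/-- `S` has the amalgamation property as a category in its own right. -/
def HasAP (S : Subcat C) : Prop :=
  ∀ z ∈ S.objs, ∀ ⦃x y : C⦄ (f : z ⟶ x) (g : z ⟶ y),
    f ∈ S.homs z x → g ∈ S.homs z y →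
      ∃ (w : C) (f' : x ⟶ w) (g' : y ⟶ w),
        f' ∈ S.homs x w ∧ g' ∈ S.homs y w ∧ f ≫ f' = g ≫ g'

/-- `S` has the weak amalgamation property as a category in its own right. -/
def HasWAP (S : Subcat C) : Prop :=
  ∀ z ∈ S.objs, ∃ (z' : C) (e : z ⟶ z'), S.AmalgamableIn e

end Subcat

/-- A weak Fraïssé sequence: (G1) and (G2). -/
def IsWeakFraisseSeq (u : ℕ ⥤ C) : Prop :=
  (∀ x : C, ∃ n : ℕ, Nonempty (x ⟶ u.obj n)) ∧
  (∀ n : ℕ, ∃ (m : ℕ) (hnm : n ≤ m), ∀ ⦃y : C⦄ (f : u.obj m ⟶ y),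
    ∃ (k : ℕ) (hmk : m ≤ k) (g : y ⟶ u.obj k),
      u.map (homOfLE hnm) ≫ f ≫ g = u.map (homOfLE (hnm.trans hmk)))

/-- Isomorphism of sequences, witnessed by an interleaving. -/
def SeqIso (u v : ℕ ⥤ C) : Prop :=
  ∃ (k l : ℕ → ℕ) (hk : StrictMono k) (hl : StrictMono l)
    (h : ∀ n : ℕ, u.obj (k n) ⟶ v.obj (l n))
    (g : ∀ n : ℕ, v.obj (l n) ⟶ u.obj (k (n + 1))),
    ∀ n : ℕ,
      h n ≫ g n = u.map (homOfLE (hk.monotone (Nat.le_succ n))) ∧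
      g n ≫ h (n + 1) = v.map (homOfLE (hl.monotone (Nat.le_succ n)))

/-- A category has the cofinal amalgamation property iff it has a
dominating subcategory with the amalgamation property. -/
theorem hasCAP_iff_exists_dominating_hasAP :
    HasCAP C ↔ ∃ S : Subcat C, S.Dominating ∧ S.HasAP := by
  constructor
  · intro hcap
    refine ⟨{ objs := {z | HasAPAt z}
              homs := fun a b => {f | HasAPAt a ∧ HasAPAt b}
              src_mem := fun h => h.1
              tgt_mem := fun h => h.2
              id_mem := fun a ha => ⟨ha, ha⟩
              comp_mem := fun hf hg => ⟨hf.1, hg.2⟩ }, ⟨?_, ?_⟩, ?_⟩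
    · intro x
      obtain ⟨z', e, hz'⟩ := hcap x
      exact ⟨z', hz', ⟨e⟩⟩
    · intro y hy z f
      obtain ⟨u, g, hu⟩ := hcap z
      exact ⟨u, g, hy, hu⟩
    · intro z hz x y f g hf hg
      obtain ⟨w, f', g', hw⟩ := hz f g
      obtain ⟨w', e, hw'⟩ := hcap w
      refine ⟨w', f' ≫ e, g' ≫ e, ⟨hf.2, hw'⟩, ⟨hg.2, hw'⟩, ?_⟩
      have := hw
      simp only [Category.id_comp] at this
      simp [reassoc_of% this]
  · rintro ⟨S, ⟨hC, hD⟩, hAP⟩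
    intro z
    obtain ⟨y, hy, ⟨e⟩⟩ := hC z
    refine ⟨y, e, ?_⟩
    intro x x' f g
    obtain ⟨u₁, g₁, h₁⟩ := hD y hy f
    obtain ⟨u₂, g₂, h₂⟩ := hD y hy g
    obtain ⟨w, f', g', _, _, heq⟩ := hAP y hy (f ≫ g₁) (g ≫ g₂) h₁ h₂
    refine ⟨w, g₁ ≫ f', g₂ ≫ g', ?_⟩
    simp only [Category.id_comp, Category.assoc] at heq ⊢
    rw [heq]
end

section
/- For a category K the following are equivalent: (a) K has the weak amalgamation property; (b) every cofinal full subcategory of K has the weak amalgamation property; (c) K has a full cofinal subcategory with the weak amalgamation property; (d) K has a dominating subcategory with the weak amalgamation property; (e) K has a weakly dominating subcategory with the weak amalgamation property. (In (b)–(e) the weak amalgamation property of a subcategory is meant as a category in its own right.) -/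
open CategoryTheory

universe v u

variable {C : Type u} [Category.{v} C]

/-- The total subcategory of `C`. -/
def totalSubcat (C : Type u) [Category.{v} C] : Subcat C where
  objs := Set.univ
  homs := fun _ _ => Set.univ
  src_mem := fun _ => trivial
  tgt_mem := fun _ => trivial
  id_mem := fun _ _ => trivial
  comp_mem := fun _ _ => trivial
/-- equivalent formulations of the weak amalgamation property. -/
theorem hasWAP_tfae :
    List.TFAE
      [HasWAP C,
       ∀ S : Subcat C, S.Full → S.Cofinal → S.HasWAP,
       ∃ S : Subcat C, S.Full ∧ S.Cofinal ∧ S.HasWAP,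
       ∃ S : Subcat C, S.Dominating ∧ S.HasWAP,
       ∃ S : Subcat C, S.WeaklyDominating ∧ S.HasWAP] := by
  tfae_have 1 → 2 := by
    intro hwap S hFull hCof z hz
    obtain ⟨z', e, he⟩ := hwap z
    obtain ⟨y, hy, ⟨h⟩⟩ := hCof z'
    refine ⟨y, e ≫ h, hFull z hz y hy _, ?_⟩
    intro x yy f g hf hg
    obtain ⟨w, f', g', hw⟩ := he (h ≫ f) (h ≫ g)
    obtain ⟨w', hw', ⟨k⟩⟩ := hCof w
    refine ⟨w', f' ≫ k, g' ≫ k,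
      hFull x (S.tgt_mem hf) w' hw' _, hFull yy (S.tgt_mem hg) w' hw' _, ?_⟩
    simp only [Category.assoc] at hw ⊢
    rw [reassoc_of% hw]
  tfae_have 2 → 3 := by
    intro h
    refine ⟨totalSubcat C, fun _ _ _ _ _ => trivial, fun x => ⟨x, trivial, ⟨𝟙 x⟩⟩, ?_⟩
    exact h _ (fun _ _ _ _ _ => trivial) (fun x => ⟨x, trivial, ⟨𝟙 x⟩⟩)
  tfae_have 3 → 4 := by
    rintro ⟨S, hFull, hCof, hW⟩
    refine ⟨S, ⟨hCof, ?_⟩, hW⟩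
    intro y hy z f
    obtain ⟨u, hu, ⟨g⟩⟩ := hCof z
    exact ⟨u, g, hFull y hy u hu _⟩
  tfae_have 4 → 5 := by
    rintro ⟨S, ⟨hCof, hD⟩, hW⟩
    refine ⟨S, ⟨hCof, ?_⟩, hW⟩
    intro y hy
    refine ⟨y, 𝟙 y, S.id_mem y hy, ?_⟩
    intro z f
    obtain ⟨u, g, hg⟩ := hD y hy f
    refine ⟨u, g, ?_⟩
    simpa using hg
  tfae_have 5 → 1 := by
    rintro ⟨S, ⟨hCof, hWd⟩, hW⟩ z
    obtain ⟨y, hy, ⟨a⟩⟩ := hCof z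
    obtain ⟨z', e, heS, he⟩ := hW y hy
    obtain ⟨y'', j, hjS, hj⟩ := hWd z' (S.tgt_mem heS)
    refine ⟨y'', a ≫ e ≫ j, ?_⟩
    intro x yy f g
    obtain ⟨u1, g1, hg1⟩ := hj f
    obtain ⟨u2, g2, hg2⟩ := hj g
    obtain ⟨w, f', g', _, _, hcomm⟩ := he _ _ hg1 hg2
    refine ⟨w, g1 ≫ f', g2 ≫ g', ?_⟩
    simp only [Category.assoc] at hcomm ⊢
    rw [hcomm]
  tfae_finish
end

section
/- If a category K has a weak Fraïssé sequence, then K is directed (every pair of K-objects admits K-arrows into a common K-object) and K has the weak amalgamation property. Moreover, for every n, if m ≥ n is as in condition (G2), then the bonding arrow u_n^m is amalgamable in K. -/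
open CategoryTheory

universe v u

variable {C : Type u} [Category.{v} C]

/-- a category with a weak Fraïssé sequence is directed and has the WAP;
moreover, whenever `m ≥ n` is as in (G2), the bonding arrow `u_n^m` is amalgamable. -/
theorem directed_wap_of_weakFraisseSeq (u : ℕ ⥤ C) (hu : IsWeakFraisseSeq u) :
    IsDirectedCat C ∧ HasWAP C ∧
      ∀ (n m : ℕ) (hnm : n ≤ m),
        (∀ ⦃y : C⦄ (f : u.obj m ⟶ y),
            ∃ (k : ℕ) (hmk : m ≤ k) (g : y ⟶ u.obj k),
              u.map (homOfLE hnm) ≫ f ≫ g = u.map (homOfLE (hnm.trans hmk))) →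
          Amalgamable (u.map (homOfLE hnm)) := by
  obtain ⟨h1, h2⟩ := hu
  have amalg : ∀ (n m : ℕ) (hnm : n ≤ m),
      (∀ ⦃y : C⦄ (f : u.obj m ⟶ y),
          ∃ (k : ℕ) (hmk : m ≤ k) (g : y ⟶ u.obj k),
            u.map (homOfLE hnm) ≫ f ≫ g = u.map (homOfLE (hnm.trans hmk))) →
        Amalgamable (u.map (homOfLE hnm)) := by
    intro n m hnm H x y f g
    obtain ⟨k, hmk, f', hf⟩ := H f
    obtain ⟨k', hmk', g', hg⟩ := H g
    refine ⟨u.obj (max k k'), f' ≫ u.map (homOfLE (le_max_left k k')),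
      g' ≫ u.map (homOfLE (le_max_right k k')), ?_⟩
    have e1 : u.map (homOfLE hnm) ≫ f ≫ f' ≫ u.map (homOfLE (le_max_left k k')) =
        u.map (homOfLE ((hnm.trans hmk).trans (le_max_left k k'))) := by
      rw [← Category.assoc, ← Category.assoc, Category.assoc (u.map (homOfLE hnm)), hf,
        ← u.map_comp, homOfLE_comp]
    have e2 : u.map (homOfLE hnm) ≫ g ≫ g' ≫ u.map (homOfLE (le_max_right k k')) =
        u.map (homOfLE ((hnm.trans hmk').trans (le_max_right k k'))) := by
      rw [← Category.assoc, ← Category.assoc, Category.assoc (u.map (homOfLE hnm)), hg,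
        ← u.map_comp, homOfLE_comp]
    rw [e1, e2]
  refine ⟨?_, ?_, amalg⟩
  · intro x y
    obtain ⟨n, ⟨a⟩⟩ := h1 x
    obtain ⟨n', ⟨b⟩⟩ := h1 y
    exact ⟨u.obj (max n n'), ⟨a ≫ u.map (homOfLE (le_max_left n n'))⟩,
      ⟨b ≫ u.map (homOfLE (le_max_right n n'))⟩⟩
  · intro z
    obtain ⟨n, ⟨a⟩⟩ := h1 z
    obtain ⟨m, hnm, H⟩ := h2 n
    refine ⟨u.obj m, a ≫ u.map (homOfLE hnm), ?_⟩
    intro x y f g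
    obtain ⟨w, f', g', hw⟩ := amalg n m hnm H f g
    exact ⟨w, f', g', by simp only [Category.assoc] at hw ⊢; rw [hw]⟩
end

section
/- Assume S is a weakly dominating subcategory of a category K and u is a weak Fraïssé sequence in S (i.e., all objects u_n and bonding arrows u_n^m lie in S and conditions (G1), (G2) hold relative to S). Then u is a weak Fraïssé sequence in K. -/
open CategoryTheory

universe v u

variable {C : Type u} [Category.{v} C]

/-- A weak Fraïssé sequence in a subcategory `S` of `C`: the sequence lies in `S`
and (G1), (G2) hold relative to `S`. -/
def IsWeakFraisseSeqInSubcat (S : Subcat C) (u : ℕ ⥤ C) : Prop :=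
  (∀ (n m : ℕ) (hnm : n ≤ m), u.map (homOfLE hnm) ∈ S.homs (u.obj n) (u.obj m)) ∧
  (∀ x ∈ S.objs, ∃ (n : ℕ) (f : x ⟶ u.obj n), f ∈ S.homs x (u.obj n)) ∧
  (∀ n : ℕ, ∃ (m : ℕ) (hnm : n ≤ m), ∀ ⦃y : C⦄ (f : u.obj m ⟶ y),
    f ∈ S.homs (u.obj m) y →
      ∃ (k : ℕ) (hmk : m ≤ k) (g : y ⟶ u.obj k), g ∈ S.homs y (u.obj k) ∧
        u.map (homOfLE hnm) ≫ f ≫ g = u.map (homOfLE (hnm.trans hmk)))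

/-- a weak Fraïssé sequence in a weakly dominating subcategory is a
weak Fraïssé sequence in the whole category. -/
theorem isWeakFraisseSeq_of_weaklyDominating
    (S : Subcat C) (hS : S.WeaklyDominating) (u : ℕ ⥤ C)
    (hu : IsWeakFraisseSeqInSubcat S u) : IsWeakFraisseSeq u := by
  obtain ⟨hbond, hG1, hG2⟩ := hu
  obtain ⟨hC, hW⟩ := hS
  constructor
  · -- G1
    intro x
    obtain ⟨y, hy, ⟨a⟩⟩ := hC x
    obtain ⟨n, f, _⟩ := hG1 y hy
    exact ⟨n, ⟨a ≫ f⟩⟩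
  · -- G2
    intro n
    obtain ⟨m, hnm, hm⟩ := hG2 n
    have hum : u.obj m ∈ S.objs := S.src_mem (hbond m m le_rfl)
    obtain ⟨y', j, hj, hjprop⟩ := hW (u.obj m) hum
    obtain ⟨k, hmk, g, hg, hgeq⟩ := hm j hj
    refine ⟨k, hnm.trans hmk, ?_⟩
    intro z f
    obtain ⟨w, h, hh⟩ := hjprop (g ≫ f)
    obtain ⟨k', hmk', g', hg', heq'⟩ := hm _ hh
    refine ⟨max k k', le_max_left _ _, h ≫ g' ≫ u.map (homOfLE (le_max_right k k')), ?_⟩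
    have e1 : u.map (homOfLE (hnm.trans hmk)) = u.map (homOfLE hnm) ≫ j ≫ g := hgeq.symm
    calc u.map (homOfLE (hnm.trans hmk)) ≫ f ≫ h ≫ g' ≫ u.map (homOfLE (le_max_right k k'))
        = (u.map (homOfLE hnm) ≫ (j ≫ (g ≫ f) ≫ h) ≫ g') ≫ u.map (homOfLE (le_max_right k k')) := by
          rw [e1]; simp only [Category.assoc]
      _ = u.map (homOfLE (hnm.trans hmk')) ≫ u.map (homOfLE (le_max_right k k')) := by rw [heq']
      _ = u.map (homOfLE ((hnm.trans hmk).trans (le_max_left k k'))) := by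
          rw [← u.map_comp]; rfl
end

section
/- Assume a category K has the amalgamation property and u is a weak Fraïssé sequence in K. Then u is a Fraïssé sequence in K, i.e., u satisfies (G1) and the strengthening of (G2) with m = n: for every n and every K-arrow f : u_n → y there exist k ≥ n and a K-arrow g : y → u_k with g ∘ f = u_n^k. -/
open CategoryTheory

universe v u

variable {C : Type u} [Category.{v} C]

/-- A Fraïssé sequence: (G1) together with (G2) where `m = n`. -/
def IsFraisseSeq (u : ℕ ⥤ C) : Prop :=
  (∀ x : C, ∃ n : ℕ, Nonempty (x ⟶ u.obj n)) ∧
  (∀ (n : ℕ) ⦃y : C⦄ (f : u.obj n ⟶ y),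
    ∃ (k : ℕ) (hnk : n ≤ k) (g : y ⟶ u.obj k), f ≫ g = u.map (homOfLE hnk))

/-- in a category with the amalgamation property, every weak Fraïssé
sequence is a Fraïssé sequence. -/
theorem isFraisseSeq_of_hasAP (hAP : HasAP C) (u : ℕ ⥤ C)
    (hu : IsWeakFraisseSeq u) : IsFraisseSeq u := by
  obtain ⟨hG1, hG2⟩ := hu
  refine ⟨hG1, fun n y f => ?_⟩
  obtain ⟨m, hnm, hm⟩ := hG2 n
  obtain ⟨w, f', g', hw⟩ := hAP (u.obj n) f (u.map (homOfLE hnm))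
  simp only [Category.id_comp] at hw
  obtain ⟨k, hmk, g, hg⟩ := hm g'
  refine ⟨k, hnm.trans hmk, f' ≫ g, ?_⟩
  rw [← Category.assoc, hw, Category.assoc, hg]
end

section
/- Assume u and v are isomorphic sequences in a category K. If u is a weak Fraïssé sequence, then so is v. -/
open CategoryTheory

universe v u

variable {C : Type u} [Category.{v} C]

/-- The key "zig-zag composition" lemma: composing `g a` with a bonding arrow of
`u` and `h b` yields the bonding arrow of `v`. -/
lemma seqIso_chain {u v : ℕ ⥤ C} {k l : ℕ → ℕ} (hk : Monotone k) (hl : Monotone l)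
    (h : ∀ n : ℕ, u.obj (k n) ⟶ v.obj (l n))
    (g : ∀ n : ℕ, v.obj (l n) ⟶ u.obj (k (n + 1)))
    (H : ∀ n : ℕ,
      h n ≫ g n = u.map (homOfLE (hk (Nat.le_succ n))) ∧
      g n ≫ h (n + 1) = v.map (homOfLE (hl (Nat.le_succ n))))
    (a : ℕ) : ∀ b : ℕ, ∀ hb : a + 1 ≤ b,
      g a ≫ u.map (homOfLE (hk hb)) ≫ h b =
        v.map (homOfLE (hl ((Nat.le_succ a).trans hb))) := by
  refine Nat.le_induction ?_ ?_
  · simpa using (H a).2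
  · intro b hb IH
    have hsplit : (homOfLE (hk (hb.trans (Nat.le_succ b))) :
        (k (a + 1) : ℕ) ⟶ k (b + 1)) =
        homOfLE (hk hb) ≫ homOfLE (hk (Nat.le_succ b)) := rfl
    calc g a ≫ u.map (homOfLE (hk (hb.trans (Nat.le_succ b)))) ≫ h (b + 1)
        = (g a ≫ u.map (homOfLE (hk hb)) ≫ h b) ≫ g b ≫ h (b + 1) := by
          rw [hsplit, u.map_comp, ← (H b).1]
          simp only [Category.assoc]
      _ = v.map (homOfLE (hl ((Nat.le_succ a).trans hb))) ≫
            v.map (homOfLE (hl (Nat.le_succ b))) := by rw [IH, (H b).2]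
      _ = _ := by rw [← v.map_comp]; rfl

/-- being a weak Fraïssé sequence is stable under isomorphism of
sequences. -/
theorem isWeakFraisseSeq_of_seqIso (u v : ℕ ⥤ C) (huv : SeqIso u v)
    (hu : IsWeakFraisseSeq u) : IsWeakFraisseSeq v := by
  obtain ⟨k, l, hk, hl, h, g, H⟩ := huv
  have chain := seqIso_chain hk.monotone hl.monotone h g H
  constructor
  · intro x
    obtain ⟨n, ⟨f⟩⟩ := hu.1 x
    exact ⟨l n, ⟨f ≫ u.map (homOfLE hk.le_apply) ≫ h n⟩⟩
  · intro n
    obtain ⟨M, hM, P⟩ := hu.2 (k (n + 1))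
    have hnb : n + 1 ≤ max (n + 1) M := le_max_left _ _
    set b := max (n + 1) M with hbdef
    have hMkb : M ≤ k b := (le_max_right _ _).trans hk.le_apply
    have hnlb : n ≤ l b := (Nat.le_of_succ_le hnb).trans hl.le_apply
    refine ⟨l b, hnlb, ?_⟩
    intro y f
    obtain ⟨K, hK, g0, eq1⟩ := P (u.map (homOfLE hMkb) ≫ h b ≫ f)
    have hbc : b ≤ max b K := le_max_left _ _
    have hnc : n + 1 ≤ max b K := hnb.trans hbc
    set c := max b K with hcdef
    have hKc : K ≤ k c := (le_max_right _ _).trans hk.le_apply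
    refine ⟨l c, hl.monotone hbc, g0 ≫ u.map (homOfLE hKc) ≫ h c, ?_⟩
    -- rearrange eq1
    have eq1' : u.map (homOfLE ((hM.trans hMkb : k (n+1) ≤ k b))) ≫ h b ≫ f ≫ g0 =
        u.map (homOfLE (hM.trans hK)) := by
      rw [← eq1]
      have : (homOfLE (hM.trans hMkb) : (k (n+1) : ℕ) ⟶ k b) =
          homOfLE hM ≫ homOfLE hMkb := rfl
      rw [this, u.map_comp]
      simp only [Category.assoc]
    have hsplit1 : (homOfLE hnlb : (n : ℕ) ⟶ l b) =
        homOfLE hl.le_apply ≫ homOfLE (hl.monotone (Nat.le_of_succ_le hnb)) := rfl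
    calc v.map (homOfLE hnlb) ≫ f ≫ g0 ≫ u.map (homOfLE hKc) ≫ h c
        = v.map (homOfLE hl.le_apply) ≫
            (g n ≫ u.map (homOfLE (hk.monotone hnb)) ≫ h b) ≫
            f ≫ g0 ≫ u.map (homOfLE hKc) ≫ h c := by
          rw [hsplit1, v.map_comp, chain n b hnb]
          simp only [Category.assoc]
      _ = v.map (homOfLE hl.le_apply) ≫ g n ≫
            (u.map (homOfLE (hM.trans hMkb)) ≫ h b ≫ f ≫ g0) ≫
            u.map (homOfLE hKc) ≫ h c := by
          simp only [Category.assoc]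
      _ = v.map (homOfLE hl.le_apply) ≫ g n ≫
            u.map (homOfLE ((hM.trans hK).trans hKc)) ≫ h c := by
          rw [eq1']
          rw [show (homOfLE ((hM.trans hK).trans hKc) :
              (k (n+1) : ℕ) ⟶ k c) =
              homOfLE (hM.trans hK) ≫ homOfLE hKc from rfl, u.map_comp]
          simp only [Category.assoc]
      _ = v.map (homOfLE hl.le_apply) ≫ v.map (homOfLE (hl.monotone (Nat.le_of_succ_le hnc))) := by
          rw [chain n c hnc]
      _ = _ := by rw [← v.map_comp]; rfl
end

section
/- Let u be a weak Fraïssé sequence in a category K such that the bonding arrow u_n^{n+1} is amalgamable in K for every n ∈ ℕ. Then u is normalized: for every n and every K-arrow f : u_{n+1} → y there exist k > n and a K-arrow g : y → u_k with g ∘ f ∘ u_n^{n+1} = u_n^k. -/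
open CategoryTheory

universe v u

variable {C : Type u} [Category.{v} C]

/-- a weak Fraïssé sequence all of whose consecutive bonding arrows are
amalgamable is normalized. -/
theorem normalized_of_amalgamable_bondings (u : ℕ ⥤ C) (hu : IsWeakFraisseSeq u)
    (ha : ∀ n : ℕ, Amalgamable (u.map (homOfLE (Nat.le_succ n)))) :
    ∀ (n : ℕ) ⦃y : C⦄ (f : u.obj (n + 1) ⟶ y),
      ∃ (k : ℕ) (hnk : n < k) (g : y ⟶ u.obj k),
        u.map (homOfLE (Nat.le_succ n)) ≫ f ≫ g = u.map (homOfLE hnk.le) := by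
  intro n y f
  obtain ⟨m, hnm, hm⟩ := hu.2 (n + 1)
  obtain ⟨w, f', g', hw⟩ := ha n f (u.map (homOfLE hnm))
  obtain ⟨k, hmk, g, hg⟩ := hm g'
  refine ⟨k, lt_of_lt_of_le (Nat.lt_succ_self n) (hnm.trans hmk), f' ≫ g, ?_⟩
  have h1 := congrArg (· ≫ g) hw
  simp only [Category.assoc] at h1
  rw [h1, hg, ← u.map_comp, homOfLE_comp]
end

section
/- Assume u and v are normalized weak Fraïssé sequences in a category K and f : u_1 → v_1 is a K-arrow. Then there exists an isomorphism of sequences from u to v extending f ∘ u_0^1: concretely, there exist increasing index sequences (k_n) and (l_n) with k_0 = 0 and l_0 = 1, and K-arrows h_n : u_{k_n} → v_{l_n} and g_n : v_{l_n} → u_{k_{n+1}} such that h_0 = f ∘ u_0^1, g_n ∘ h_n = u_{k_n}^{k_{n+1}}, and h_{n+1} ∘ g_n = v_{l_n}^{l_{n+1}} for all n. -/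
open CategoryTheory

universe v u

variable {C : Type u} [Category.{v} C]

/-- A normalized weak Fraïssé sequence: (G1), and (G2) with `m = n + 1`. -/
def IsNormalizedWeakFraisseSeq (u : ℕ ⥤ C) : Prop :=
  (∀ x : C, ∃ n : ℕ, Nonempty (x ⟶ u.obj n)) ∧
  (∀ (n : ℕ) ⦃y : C⦄ (f : u.obj (n + 1) ⟶ y),
    ∃ (k : ℕ) (hnk : n < k) (g : y ⟶ u.obj k),
      u.map (homOfLE (Nat.le_succ n)) ≫ f ≫ g = u.map (homOfLE hnk.le))

/-- One back-and-forth step between two normalized weak Fraïssé sequences. -/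
lemma normalized_step (u v : ℕ ⥤ C)
    (hu : IsNormalizedWeakFraisseSeq u) (hv : IsNormalizedWeakFraisseSeq v) :
    ∀ (k l : ℕ) (f : u.obj (k + 1) ⟶ v.obj l),
      ∃ (k' l' : ℕ) (hk : k < k') (hl : l < l')
        (g : v.obj l ⟶ u.obj k') (f' : u.obj (k' + 1) ⟶ v.obj l'),
        (u.map (homOfLE (Nat.le_succ k)) ≫ f) ≫ g = u.map (homOfLE hk.le) ∧
        g ≫ (u.map (homOfLE (Nat.le_succ k')) ≫ f') = v.map (homOfLE hl.le) := by
  intro k l f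
  obtain ⟨k', hkk', g', hg'⟩ := hu.2 k (f ≫ v.map (homOfLE (Nat.le_succ l)))
  obtain ⟨l', hll', f'', hf''⟩ := hv.2 l (g' ≫ u.map (homOfLE (Nat.le_succ k')))
  refine ⟨k', l', hkk', hll', v.map (homOfLE (Nat.le_succ l)) ≫ g', f'', ?_, ?_⟩
  · rw [← hg']; simp
  · rw [← hf'']; simp

/-- given normalized weak Fraïssé sequences `u`, `v` and an arrow
`f : u_1 ⟶ v_1`, there is an isomorphism of sequences from `u` to `v` extending
`f ∘ u_0^1`. -/
theorem seqIso_extending_arrow (u v : ℕ ⥤ C)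
    (hu : IsNormalizedWeakFraisseSeq u) (hv : IsNormalizedWeakFraisseSeq v)
    (f : u.obj 1 ⟶ v.obj 1) :
    ∃ (k l : ℕ → ℕ) (hk : StrictMono k) (hl : StrictMono l)
      (hk0 : k 0 = 0) (hl0 : l 0 = 1)
      (h : ∀ n : ℕ, u.obj (k n) ⟶ v.obj (l n))
      (g : ∀ n : ℕ, v.obj (l n) ⟶ u.obj (k (n + 1))),
      h 0 = eqToHom (congrArg u.obj hk0) ≫ u.map (homOfLE (Nat.zero_le 1)) ≫ f ≫
          eqToHom (congrArg v.obj hl0).symm ∧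
      ∀ n : ℕ,
        h n ≫ g n = u.map (homOfLE (hk.monotone (Nat.le_succ n))) ∧
        g n ≫ h (n + 1) = v.map (homOfLE (hl.monotone (Nat.le_succ n))) := by
  choose K L hK hL G F hFG hGF using normalized_step u v hu hv
  -- states : (k, l, f : u.obj (k+1) ⟶ v.obj l)
  let st : ℕ → Σ' (k : ℕ) (l : ℕ), u.obj (k + 1) ⟶ v.obj l := fun n =>
    Nat.rec ⟨0, 1, f⟩
      (fun _ s => ⟨K s.1 s.2.1 s.2.2, L s.1 s.2.1 s.2.2, F s.1 s.2.1 s.2.2⟩) n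
  have hkstep : ∀ n, (st n).1 < (st (n + 1)).1 := fun n => hK _ _ _
  have hlstep : ∀ n, (st n).2.1 < (st (n + 1)).2.1 := fun n => hL _ _ _
  refine ⟨fun n => (st n).1, fun n => (st n).2.1,
    strictMono_nat_of_lt_succ hkstep, strictMono_nat_of_lt_succ hlstep, rfl, rfl,
    fun n => u.map (homOfLE (Nat.le_succ (st n).1)) ≫ (st n).2.2,
    fun n => G (st n).1 (st n).2.1 (st n).2.2, ?_, ?_⟩
  · simp; rfl
  · intro n
    constructor
    · exact hFG (st n).1 (st n).2.1 (st n).2.2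
    · exact hGF (st n).1 (st n).2.1 (st n).2.2
end

section
/- Any two weak Fraïssé sequences in the same category K are isomorphic as sequences: if u and v are weak Fraïssé sequences in K, then there exist increasing index sequences (k_n) and (l_n) of natural numbers and K-arrows h_n : u_{k_n} → v_{l_n} and g_n : v_{l_n} → u_{k_{n+1}} such that g_n ∘ h_n = u_{k_n}^{k_{n+1}} and h_{n+1} ∘ g_n = v_{l_n}^{l_{n+1}} for all n. -/
open CategoryTheory

universe v u

variable {C : Type u} [Category.{v} C]

/-- Auxiliary state for the back-and-forth construction. -/
structure FSt (u v : ℕ ⥤ C) where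
  k : ℕ
  m : ℕ
  l : ℕ
  hkm : k ≤ m
  good : ∀ ⦃y : C⦄ (f : u.obj m ⟶ y),
    ∃ (r : ℕ) (hmr : m ≤ r) (g : y ⟶ u.obj r),
      u.map (homOfLE hkm) ≫ f ≫ g = u.map (homOfLE (hkm.trans hmr))
  h' : u.obj m ⟶ v.obj l

lemma fstep {u v : ℕ ⥤ C} (hu : IsWeakFraisseSeq u) (hv : IsWeakFraisseSeq v)
    (s : FSt u v) :
    ∃ (t : FSt u v) (hk : s.k < t.k) (hl : s.l < t.l)
      (g : v.obj s.l ⟶ u.obj t.k),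
      (u.map (homOfLE s.hkm) ≫ s.h') ≫ g = u.map (homOfLE hk.le) ∧
      g ≫ (u.map (homOfLE t.hkm) ≫ t.h') = v.map (homOfLE hl.le) := by
  obtain ⟨p, hlp, Pv⟩ := hv.2 s.l
  obtain ⟨r, hmr, g1, hg1⟩ := s.good (s.h' ≫ v.map (homOfLE hlp))
  have hrk' : r ≤ max r (s.k + 1) := le_max_left _ _
  have hkk' : s.k < max r (s.k + 1) := lt_of_lt_of_le (Nat.lt_succ_self _) (le_max_right _ _)
  obtain ⟨m', hk'm', good'⟩ := hu.2 (max r (s.k + 1))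
  obtain ⟨q, hpq, h1, hh1⟩ := Pv ((g1 ≫ u.map (homOfLE hrk')) ≫ u.map (homOfLE hk'm'))
  have hql' : q ≤ max q (s.l + 1) := le_max_left _ _
  have hll' : s.l < max q (s.l + 1) := lt_of_lt_of_le (Nat.lt_succ_self _) (le_max_right _ _)
  refine ⟨⟨max r (s.k + 1), m', max q (s.l + 1), hk'm', good',
      h1 ≫ v.map (homOfLE hql')⟩, hkk', hll',
    v.map (homOfLE hlp) ≫ g1 ≫ u.map (homOfLE hrk'), ?_, ?_⟩
  · have := congrArg (· ≫ u.map (homOfLE hrk')) hg1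
    simp only [Category.assoc, ← Functor.map_comp, ← Functor.map_comp_assoc, homOfLE_comp] at this ⊢
    exact this
  · have := congrArg (· ≫ v.map (homOfLE hql')) hh1
    simp only [Category.assoc, ← Functor.map_comp, ← Functor.map_comp_assoc, homOfLE_comp] at this ⊢
    exact this

/-- any two weak Fraïssé sequences in the same category are isomorphic
as sequences. -/
theorem seqIso_of_weakFraisseSeqs (u v : ℕ ⥤ C)
    (hu : IsWeakFraisseSeq u) (hv : IsWeakFraisseSeq v) : SeqIso u v := by
  classical
  choose step hk hl gg e1 e2 using fun s => fstep hu hv s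
  obtain ⟨m0, h0m, good0⟩ := hu.2 0
  obtain ⟨l0, ⟨a0⟩⟩ := hv.1 (u.obj m0)
  let s0 : FSt u v := ⟨0, m0, l0, h0m, good0, a0⟩
  let st : ℕ → FSt u v := fun n => n.rec s0 (fun _ s => step s)
  have hst : ∀ n, st (n + 1) = step (st n) := fun n => rfl
  refine ⟨fun n => (st n).k, fun n => (st n).l,
    strictMono_nat_of_lt_succ (fun n => hk (st n)),
    strictMono_nat_of_lt_succ (fun n => hl (st n)),
    fun n => u.map (homOfLE (st n).hkm) ≫ (st n).h',
    fun n => gg (st n), fun n => ⟨e1 (st n), e2 (st n)⟩⟩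
end

section
/- Let u be a weak Fraïssé sequence in a category K and let x be a sequence in K such that each bonding arrow x_n^{n+1} is amalgamable in K. Then there exists an arrow of sequences from x to u: there are an increasing map s : ℕ → ℕ and K-arrows e_n : x_n → u_{s(n)} such that u_{s(n)}^{s(n+1)} ∘ e_n = e_{n+1} ∘ x_n^{n+1} for every n. -/
open CategoryTheory

universe v u

variable {C : Type u} [Category.{v} C]

section AuxWF

variable (u x : ℕ ⥤ C)

/-- Auxiliary stage data for the construction. -/
structure AuxStage (n : ℕ) where
  a : ℕ
  t : ℕ
  ha : a ≤ t
  ψ : x.obj (n + 1) ⟶ u.obj a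
  absorb : ∀ ⦃y : C⦄ (f : u.obj t ⟶ y), ∃ (k : ℕ) (hk : t ≤ k) (g : y ⟶ u.obj k),
    u.map (homOfLE ha) ≫ f ≫ g = u.map (homOfLE (ha.trans hk))

/-- The canonical arrow of a stage. -/
def AuxStage.φ {n : ℕ} (st : AuxStage u x n) : x.obj (n + 1) ⟶ u.obj st.t :=
  st.ψ ≫ u.map (homOfLE st.ha)

lemma auxMapComp {i j l : ℕ} (hij : i ≤ j) (hjl : j ≤ l) :
    u.map (homOfLE hij) ≫ u.map (homOfLE hjl) = u.map (homOfLE (hij.trans hjl)) := by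
  rw [← u.map_comp, homOfLE_comp]

lemma auxBase (hu : IsWeakFraisseSeq u) : Nonempty (AuxStage u x 0) := by
  obtain ⟨p, ⟨h⟩⟩ := hu.1 (x.obj 1)
  obtain ⟨m, hpm, habs⟩ := hu.2 p
  exact ⟨⟨p, m, hpm, h, habs⟩⟩

lemma auxStep (hu : IsWeakFraisseSeq u)
    (hx : ∀ n : ℕ, Amalgamable (x.map (homOfLE (Nat.le_succ n)))) (n : ℕ)
    (st : AuxStage u x n) :
    ∃ (st' : AuxStage u x (n + 1)) (h : st.t < st'.t),
      (x.map (homOfLE (Nat.le_succ n)) ≫ st.φ) ≫ u.map (homOfLE h.le) =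
        x.map (homOfLE (Nat.le_succ n)) ≫ x.map (homOfLE (Nat.le_succ (n + 1))) ≫ st'.φ := by
  obtain ⟨p, ⟨h⟩⟩ := hu.1 (x.obj (n + 2))
  obtain ⟨w, f', g', heq1⟩ := hx n st.φ (x.map (homOfLE (Nat.le_succ (n + 1))) ≫ h)
  obtain ⟨k, hk, r, heq2⟩ := st.absorb f'
  obtain ⟨m, hmk, habs⟩ := hu.2 (k + 1)
  refine ⟨⟨k + 1, m, hmk, h ≫ g' ≫ r ≫ u.map (homOfLE (Nat.le_succ k)), habs⟩,
    lt_of_lt_of_le (Nat.lt_succ_of_le hk) hmk, ?_⟩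
  have key : x.map (homOfLE (Nat.le_succ n)) ≫ st.φ ≫ u.map (homOfLE hk) =
      x.map (homOfLE (Nat.le_succ n)) ≫ x.map (homOfLE (Nat.le_succ (n + 1))) ≫
        (h ≫ g' ≫ r) := by
    calc x.map (homOfLE (Nat.le_succ n)) ≫ st.φ ≫ u.map (homOfLE hk)
        = x.map (homOfLE (Nat.le_succ n)) ≫ st.ψ ≫
            (u.map (homOfLE st.ha) ≫ u.map (homOfLE hk)) := by
          simp [AuxStage.φ]
      _ = x.map (homOfLE (Nat.le_succ n)) ≫ st.ψ ≫
            (u.map (homOfLE st.ha) ≫ f' ≫ r) := by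
          rw [auxMapComp, heq2]
      _ = x.map (homOfLE (Nat.le_succ n)) ≫ (st.φ ≫ f') ≫ r := by
          simp [AuxStage.φ]
      _ = x.map (homOfLE (Nat.le_succ n)) ≫
            ((x.map (homOfLE (Nat.le_succ (n + 1))) ≫ h) ≫ g') ≫ r := by
          simp only [← Category.assoc] at heq1 ⊢
          rw [heq1]
      _ = x.map (homOfLE (Nat.le_succ n)) ≫ x.map (homOfLE (Nat.le_succ (n + 1))) ≫
            (h ≫ g' ≫ r) := by simp
  have expand : u.map (homOfLE (lt_of_lt_of_le (Nat.lt_succ_of_le hk) hmk).le) =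
      u.map (homOfLE hk) ≫ u.map (homOfLE (Nat.le_succ k)) ≫ u.map (homOfLE hmk) := by
    rw [auxMapComp, auxMapComp]
  simp only [AuxStage.φ, expand]
  calc (x.map (homOfLE (Nat.le_succ n)) ≫ st.φ) ≫
        u.map (homOfLE hk) ≫ u.map (homOfLE (Nat.le_succ k)) ≫ u.map (homOfLE hmk)
      = (x.map (homOfLE (Nat.le_succ n)) ≫ st.φ ≫ u.map (homOfLE hk)) ≫
          u.map (homOfLE (Nat.le_succ k)) ≫ u.map (homOfLE hmk) := by simp
    _ = (x.map (homOfLE (Nat.le_succ n)) ≫ x.map (homOfLE (Nat.le_succ (n + 1))) ≫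
          (h ≫ g' ≫ r)) ≫ u.map (homOfLE (Nat.le_succ k)) ≫ u.map (homOfLE hmk) := by
        rw [key]
    _ = x.map (homOfLE (Nat.le_succ n)) ≫ x.map (homOfLE (Nat.le_succ (n + 1))) ≫
          (h ≫ g' ≫ r ≫ u.map (homOfLE (Nat.le_succ k))) ≫ u.map (homOfLE hmk) := by
        simp

end AuxWF

/-- every sequence with amalgamable consecutive bonding arrows admits
an arrow of sequences into any weak Fraïssé sequence. -/
theorem exists_seq_arrow_into_weakFraisseSeq (u : ℕ ⥤ C)
    (hu : IsWeakFraisseSeq u) (x : ℕ ⥤ C)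
    (hx : ∀ n : ℕ, Amalgamable (x.map (homOfLE (Nat.le_succ n)))) :
    ∃ (s : ℕ → ℕ) (hs : StrictMono s) (e : ∀ n : ℕ, x.obj n ⟶ u.obj (s n)),
      ∀ n : ℕ,
        e n ≫ u.map (homOfLE (hs.monotone (Nat.le_succ n))) =
          x.map (homOfLE (Nat.le_succ n)) ≫ e (n + 1) := by
  classical
  let F : ∀ n : ℕ, AuxStage u x n := fun n =>
    Nat.rec (auxBase u x hu).some (fun n st => (auxStep u x hu hx n st).choose) n
  have spec : ∀ n : ℕ, ∃ h : (F n).t < (F (n + 1)).t,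
      (x.map (homOfLE (Nat.le_succ n)) ≫ (F n).φ) ≫ u.map (homOfLE h.le) =
        x.map (homOfLE (Nat.le_succ n)) ≫ x.map (homOfLE (Nat.le_succ (n + 1))) ≫
          (F (n + 1)).φ :=
    fun n => (auxStep u x hu hx n (F n)).choose_spec
  have hs : StrictMono (fun n => (F n).t) :=
    strictMono_nat_of_lt_succ (fun n => (spec n).choose)
  refine ⟨fun n => (F n).t, hs, fun n => x.map (homOfLE (Nat.le_succ n)) ≫ (F n).φ, fun n => ?_⟩
  obtain ⟨hlt, heq⟩ := spec n
  simpa using heq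
end

section
/- Let K be a subcategory of a category L and let u be a weak Fraïssé sequence in K having a colimit U in L. Then Odd has a winning strategy in the Banach–Mazur game BM(K, U): there is a strategy for Odd such that every play in which Odd follows it results in a sequence that has a colimit in L isomorphic to U. -/
open CategoryTheory CategoryTheory.Limits

universe v u v' u'

variable {C : Type u} [Category.{v} C]

/-- The restriction of a sequence to its first `n + 1` terms. -/
def restrictSeq (a : ℕ ⥤ C) (n : ℕ) : ComposableArrows C n :=
  (Fin.val_strictMono (n := n + 1)).monotone.functor ⋙ a

/-- A strategy for Odd in the Banach–Mazur game on `C`: a response (an arrow out of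
the last object) to every position ending with Eve's move. -/
def OddStrat (C : Type u) [Category.{v} C] : Type (max u v) :=
  ∀ (n : ℕ) (p : ComposableArrows C (2 * n)),
    Σ b : C, (p.obj ⟨2 * n, Nat.lt_succ_self _⟩ ⟶ b)

/-- The play `a` follows Odd's strategy `σ`. -/
def FollowsOdd (σ : OddStrat C) (a : ℕ ⥤ C) : Prop :=
  ∀ n : ℕ, ∃ h : a.obj (2 * n + 1) = (σ n (restrictSeq a (2 * n))).1,
    a.map (homOfLE (Nat.le_succ (2 * n))) =
      (σ n (restrictSeq a (2 * n))).2 ≫ eqToHom h.symm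

section
variable {L : Type u'} [Category.{v'} L] (ι : C ⥤ L)

/-- Odd wins the play `a` of the Banach–Mazur game `BM(C, V)` (with colimits taken in
`L` along the inclusion `ι`): the resulting sequence has a colimit in `L` isomorphic
to `V`. -/
def OddWinsPlay (V : L) (a : ℕ ⥤ C) : Prop :=
  ∃ d : Cocone (a ⋙ ι), Nonempty (IsColimit d) ∧ Nonempty (d.pt ≅ V)

/-- `σ` is a winning strategy for Odd in `BM(C, V)`. -/
def OddWinning (V : L) (σ : OddStrat C) : Prop :=
  ∀ a : ℕ ⥤ C, FollowsOdd σ a → OddWinsPlay ι V a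

end


/-!
Odd always answers with an arrow into `u`, landing at the index `m` that (G2) attaches to
the index `n` reached so far. At his next turn, (G2) applied to Eve's answer `f` out of `u_m`
gives an arrow back into `u` whose composite with `f` agrees with `u` after precomposing
`u_n^m`. Hence a subsequence of `u` and a subsequence of the play zigzag into each other;
zigzagging sequences have the same colimit, and subsequences along strictly increasing
indices are final.
-/

section Zigzag

variable {D : Type*} [Category D] {v w : ℕ ⥤ D}

abbrev zigzagCocone (φ : ∀ i, v.obj i ⟶ w.obj i) (ψ : ∀ i, w.obj i ⟶ v.obj (i + 1))
    (hφψ : ∀ i, φ i ≫ ψ i = v.map (homOfLE i.le_succ))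
    (hψφ : ∀ i, ψ i ≫ φ (i + 1) = w.map (homOfLE i.le_succ)) (c : Cocone v) : Cocone w where
  pt := c.pt
  ι := NatTrans.ofSequence (fun i => ψ i ≫ c.ι.app (i + 1)) fun i => by
    simp [← hψφ, reassoc_of% hφψ]

def isColimitZigzagCocone (φ : ∀ i, v.obj i ⟶ w.obj i) (ψ : ∀ i, w.obj i ⟶ v.obj (i + 1))
    (hφψ : ∀ i, φ i ≫ ψ i = v.map (homOfLE i.le_succ))
    (hψφ : ∀ i, ψ i ≫ φ (i + 1) = w.map (homOfLE i.le_succ)) {c : Cocone v}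
    (hc : IsColimit c) : IsColimit (zigzagCocone φ ψ hφψ hψφ c) where
  desc s := hc.desc ((Cocone.precompose (NatTrans.ofSequence φ fun i => by
    rw [← hφψ, Category.assoc, hψφ])).obj s)
  fac s i := by
    simp [reassoc_of% hψφ]
  uniq s f hf := hc.hom_ext fun i => by
    rw [hc.fac, Cocone.precompose_obj_ι, NatTrans.comp_app, ← hf]
    simp [reassoc_of% hφψ]

end Zigzag

theorem StrictMono.final_functor {f : ℕ → ℕ} (hf : StrictMono f) :
    hf.monotone.functor.Final :=
  (Monotone.final_functor_iff hf.monotone).2 fun j => ⟨j, hf.id_le j⟩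

theorem exists_isColimit_of_zigzag {D : Type*} [Category D] {u a : ℕ ⥤ D}
    {c : Cocone u} (hc : IsColimit c) {n m : ℕ → ℕ} (hn : StrictMono n) (hm : StrictMono m)
    (φ : ∀ i, u.obj (n i) ⟶ a.obj (m i)) (ψ : ∀ i, a.obj (m i) ⟶ u.obj (n (i + 1)))
    (hφψ : ∀ i, φ i ≫ ψ i = u.map (homOfLE (hn.monotone i.le_succ)))
    (hψφ : ∀ i, ψ i ≫ φ (i + 1) = a.map (homOfLE (hm.monotone i.le_succ))) :
    ∃ d : Cocone a, Nonempty (IsColimit d) ∧ Nonempty (d.pt ≅ c.pt) := by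
  have := hn.final_functor
  have := hm.final_functor
  have hcn : IsColimit (c.whisker hn.monotone.functor) :=
    (Functor.Final.isColimitWhiskerEquiv _ c).symm hc
  exact ⟨_, ⟨(Functor.Final.isColimitExtendCoconeEquiv hm.monotone.functor _).symm
    (isColimitZigzagCocone (v := hn.monotone.functor ⋙ u) (w := hm.monotone.functor ⋙ a)
      φ ψ hφψ hψφ hcn)⟩, ⟨Iso.refl _⟩⟩

namespace IsWeakFraisseSeq

variable {K : Type u} [Category.{v} K] {u : ℕ ⥤ K} (hu : IsWeakFraisseSeq u)

/-- The index `m` that (G2) provides for `n`. -/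
noncomputable def stage (n : ℕ) : ℕ := (hu.2 n).choose

theorem le_stage (n : ℕ) : n ≤ hu.stage n := (hu.2 n).choose_spec.choose

/-- (G2), with the target index pushed past `stage n` so that Odd's indices increase strictly. -/
theorem exists_absorb {n : ℕ} {y : K} (f : u.obj (hu.stage n) ⟶ y) :
    ∃ (k : ℕ) (hk : hu.stage n < k) (g : y ⟶ u.obj k),
      u.map (homOfLE (hu.le_stage n)) ≫ f ≫ g =
        u.map (homOfLE ((hu.le_stage n).trans hk.le)) := by
  obtain ⟨k, hk, g, hg⟩ := (hu.2 n).choose_spec.choose_spec f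
  replace hg : u.map (homOfLE (hu.le_stage n)) ≫ f ≫ g =
      u.map (homOfLE ((hu.le_stage n).trans hk)) := hg
  refine ⟨max k (hu.stage n + 1), by omega, g ≫ u.map (homOfLE (le_max_left _ _)), ?_⟩
  rw [← Category.assoc f, ← Category.assoc, hg, ← u.map_comp]
  rfl

noncomputable def absorbIndex {n : ℕ} {y : K} (f : u.obj (hu.stage n) ⟶ y) : ℕ :=
  (hu.exists_absorb f).choose

theorem stage_lt_absorbIndex {n : ℕ} {y : K} (f : u.obj (hu.stage n) ⟶ y) :
    hu.stage n < hu.absorbIndex f :=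
  (hu.exists_absorb f).choose_spec.choose

noncomputable def absorb {n : ℕ} {y : K} (f : u.obj (hu.stage n) ⟶ y) :
    y ⟶ u.obj (hu.absorbIndex f) :=
  (hu.exists_absorb f).choose_spec.choose_spec.choose

theorem map_comp_absorb {n : ℕ} {y : K} (f : u.obj (hu.stage n) ⟶ y) :
    u.map (homOfLE (hu.le_stage n)) ≫ f ≫ hu.absorb f =
      u.map (homOfLE ((hu.le_stage n).trans (hu.stage_lt_absorbIndex f).le)) :=
  (hu.exists_absorb f).choose_spec.choose_spec.choose_spec

noncomputable def entryIndex (x : K) : ℕ := (hu.1 x).choose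

noncomputable def entry (x : K) : x ⟶ u.obj (hu.stage (hu.entryIndex x)) :=
  (hu.1 x).choose_spec.some ≫ u.map (homOfLE (hu.le_stage _))

open Classical in
/-- Odd's move at a position of length `2 * i`, together with the index `n` such that it
lands at `u (stage n)`. Odd recomputes his previous move from the position; the test fails
only at positions where Odd did not follow this strategy, and there he may play anything. -/
noncomputable def oddResponse :
    (i : ℕ) → (p : ComposableArrows K (2 * i)) → Σ n : ℕ, (p.right ⟶ u.obj (hu.stage n))
  | 0, p => ⟨hu.entryIndex p.right, hu.entry p.right⟩
  | i + 1, p =>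
    if h : p.obj' (2 * i + 1) = u.obj (hu.stage (oddResponse i p.δlast.δlast).1) then
      ⟨_, hu.absorb (eqToHom h.symm ≫ p.map' (2 * i + 1) (2 * i + 2)) ≫
        u.map (homOfLE (hu.le_stage _))⟩
    else ⟨hu.entryIndex p.right, hu.entry p.right⟩

noncomputable def oddStrat : OddStrat K := fun i p => ⟨_, (hu.oddResponse i p).2⟩

theorem oddResponse_succ_spec {a : ℕ ⥤ K} {i : ℕ}
    (h : a.obj (2 * i + 1) = u.obj (hu.stage (hu.oddResponse i (restrictSeq a (2 * i))).1)) :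
    ∃ (hlt : (hu.oddResponse i (restrictSeq a (2 * i))).1 <
        (hu.oddResponse (i + 1) (restrictSeq a (2 * (i + 1)))).1)
      (ψ : a.obj (2 * i + 2) ⟶ u.obj (hu.oddResponse (i + 1) (restrictSeq a (2 * (i + 1)))).1),
      u.map (homOfLE (hu.le_stage _)) ≫ (eqToHom h.symm ≫
          a.map (homOfLE (2 * i + 1).le_succ)) ≫ ψ = u.map (homOfLE hlt.le) ∧
      ψ ≫ u.map (homOfLE (hu.le_stage _)) =
        (hu.oddResponse (i + 1) (restrictSeq a (2 * (i + 1)))).2 := by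
  have hR : hu.oddResponse (i + 1) (restrictSeq a (2 * (i + 1))) =
      ⟨_, hu.absorb (eqToHom h.symm ≫ a.map (homOfLE (2 * i + 1).le_succ)) ≫
        u.map (homOfLE (hu.le_stage _))⟩ := by
    rw [oddResponse]
    exact dif_pos h
  rw [hR]
  exact ⟨(hu.le_stage _).trans_lt (hu.stage_lt_absorbIndex _), hu.absorb _,
    hu.map_comp_absorb _, rfl⟩

theorem exists_zigzag_of_followsOdd {a : ℕ ⥤ K} (ha : FollowsOdd hu.oddStrat a) :
    ∃ (n : ℕ → ℕ) (hn : StrictMono n) (φ : ∀ i, u.obj (n i) ⟶ a.obj (2 * i + 2))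
      (ψ : ∀ i, a.obj (2 * i + 2) ⟶ u.obj (n (i + 1))),
      (∀ i, φ i ≫ ψ i = u.map (homOfLE (hn.monotone i.le_succ))) ∧
      ∀ i, ψ i ≫ φ (i + 1) = a.map (homOfLE (by omega : 2 * i + 2 ≤ 2 * (i + 1) + 2)) := by
  choose hobj hmap using ha
  choose hlt ψ hφψ hψ using fun i => hu.oddResponse_succ_spec (hobj i)
  refine ⟨fun i => (hu.oddResponse i (restrictSeq a (2 * i))).1, strictMono_nat_of_lt_succ hlt,
    fun i => u.map (homOfLE (hu.le_stage _)) ≫ eqToHom (hobj i).symm ≫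
      a.map (homOfLE (2 * i + 1).le_succ),
    ψ, fun i => (Category.assoc _ _ _).trans (hφψ i), fun i => ?_⟩
  calc ψ i ≫ _ = (ψ i ≫ u.map (homOfLE (hu.le_stage _))) ≫ eqToHom (hobj (i + 1)).symm ≫
        a.map (homOfLE (2 * i + 3).le_succ) := by simp only [Category.assoc]
    _ = a.map (homOfLE (2 * i + 2).le_succ) ≫ a.map (homOfLE (2 * i + 3).le_succ) := by
        rw [← Category.assoc, hψ i]
        exact (hmap (i + 1)).symm =≫ _
    _ = _ := by rw [← a.map_comp]; rfl

end IsWeakFraisseSeq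

theorem odd_winning_of_weakFraisseSeq_general
    {K : Type u} [Category.{v} K] {L : Type u'} [Category.{v'} L]
    (ι : K ⥤ L)
    (u : ℕ ⥤ K) (hu : IsWeakFraisseSeq u)
    (c : Cocone (u ⋙ ι)) (hc : IsColimit c) :
    ∃ σ : OddStrat K, OddWinning ι c.pt σ := by
  refine ⟨hu.oddStrat, fun a ha => ?_⟩
  obtain ⟨n, hn, φ, ψ, hφψ, hψφ⟩ := hu.exists_zigzag_of_followsOdd ha
  exact exists_isColimit_of_zigzag hc hn (m := fun i => 2 * i + 2)
    (fun i j h => show 2 * i + 2 < 2 * j + 2 by omega)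
    (fun i => ι.map (φ i)) (fun i => ι.map (ψ i))
    (fun i => by rw [← ι.map_comp, hφψ]; rfl) (fun i => by rw [← ι.map_comp, hψφ]; rfl)

/-- if `K` is a subcategory of `L` (the inclusion `ι` being faithful and
injective on objects) and `u` is a weak Fraïssé sequence in `K` having a colimit `U`
in `L`, then Odd has a winning strategy in the Banach–Mazur game `BM(K, U)`. -/
theorem odd_winning_of_weakFraisseSeq
    {K : Type u} [Category.{v} K] {L : Type u'} [Category.{v'} L]
    (ι : K ⥤ L) (hfaith : ι.Faithful) (hinj : Function.Injective ι.obj)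
    (u : ℕ ⥤ K) (hu : IsWeakFraisseSeq u)
    (c : Cocone (u ⋙ ι)) (hc : IsColimit c) :
    ∃ σ : OddStrat K, OddWinning ι c.pt σ :=
  odd_winning_of_weakFraisseSeq_general ι u hu c hc
end
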